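/- Let W_n be the n-fold iterated permutational wreath product of elementary abelian p-groups A_0,…,A_{n−1} (W_0 = 1, W_{k+1} = W_k ≀ A_k), realized as automorphisms of the finite rooted tree of depth n with levels A_{n−1},…,A_0. If g ∈ St(k) (the pointwise stabilizer of level k) and h ∈ W_n is arbitrary, then [g,_{p^k} h] ∈ St(k+1). -/

import Mathlib

/-- The commutator `[x, y] = x⁻¹ y⁻¹ x y`. -/
def pcomm {G : Type*} [Group G] (x y : G) : G := x⁻¹ * y⁻¹ * x * y

/-- The iterated (Engel) commutator `[g,_n h]`. -/
def engel {G : Type*} [Group G] (g h : G) : ℕ → G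
  | 0 => g
  | n + 1 => pcomm (engel g h n) h

/-- The action of the top group `T` (acting on itself by right multiplication)
on the base group `T → G` of the permutational wreath product `G ≀ T`. -/
def wreathRφ (G T : Type*) [Group G] [Group T] : T →* MulAut (T → G) where
  toFun t :=
    { toFun := fun f x => f (x * t)
      invFun := fun f x => f (x * t⁻¹)
      left_inv := fun f => funext fun x => by simp
      right_inv := fun f => funext fun x => by simp
      map_mul' := fun f g => rfl }
  map_one' := MulEquiv.ext fun f => funext fun x => by simp
  map_mul' := fun a b => MulEquiv.ext fun f => funext fun x => by
    simp [mul_assoc]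

/-- The iterated permutational wreath products `W_0 = 1`, `W_{n+1} = W_n ≀ A_n`. -/
def Wrec (A : ℕ → Type) [∀ i, CommGroup (A i)] : ℕ → (T : Type) ×' Group T :=
  fun n =>
    Nat.rec (motive := fun _ => (T : Type) ×' Group T)
      ⟨PUnit, inferInstance⟩
      (fun n ih =>
        letI := ih.2
        ⟨(A n → ih.1) ⋊[wreathRφ ih.1 (A n)] A n, inferInstance⟩) n

/-- The `n`-fold iterated permutational wreath product of `A_0, …, A_{n-1}`. -/
def W (A : ℕ → Type) [∀ i, CommGroup (A i)] (n : ℕ) : Type := (Wrec A n).1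

noncomputable instance (A : ℕ → Type) [∀ i, CommGroup (A i)] (n : ℕ) :
    Group (W A n) := (Wrec A n).2

/-- The pointwise stabilizer `St(k)` of the `k`-th level of the finite rooted
tree on which `W_n` acts: `St(k+1)` consists of the elements of the base group
`W_n^{A_n} ≤ W_{n+1}` all of whose components lie in `St_{W_n}(k)`. -/
noncomputable def St (A : ℕ → Type) [∀ i, CommGroup (A i)] : (n k : ℕ) → Subgroup (W A n)
  | 0, _ => ⊤
  | _ + 1, 0 => ⊤
  | n + 1, k + 1 =>
    Subgroup.map
      (SemidirectProduct.inl (N := A n → W A n) (G := A n)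
        (φ := wreathRφ (W A n) (A n)))
      (Subgroup.pi Set.univ fun _ => St A n k)


/-!
Modulo `St(k+1)`, the image `M` of `St(k)` is an abelian normal subgroup of exponent `p`, since
commutators and `p`-th powers of elements of `St(k)` lie in `St(k+1)`. Written additively,
conjugation by `h` is an endomorphism `τ` of `M` with `[v, h] = (τ - 1) v`, and `End M` has
characteristic `p`, so `[g,_{p^k} h] = (τ - 1)^{p^k} g = (τ^{p^k} - 1) g = [g, h^{p^k}]`.
This lies in `St(k+1)` because `h^{p^k} ∈ St(k)`.
-/

section Commutators

variable {G H : Type*} [Group G] [Group H]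

lemma pcomm_eq_one_iff {a b : G} : pcomm a b = 1 ↔ a * b = b * a := by
  rw [show pcomm a b = (b * a)⁻¹ * (a * b) by simp only [pcomm]; group, inv_mul_eq_one, eq_comm]

lemma map_pcomm {F : Type*} [FunLike F G H] [MonoidHomClass F G H] (f : F) (x y : G) :
    f (pcomm x y) = pcomm (f x) (f y) := by
  simp [pcomm]

lemma map_engel {F : Type*} [FunLike F G H] [MonoidHomClass F G H] (f : F) (x y : G) (m : ℕ) :
    f (engel x y m) = engel (f x) (f y) m := by
  induction m with
  | zero => rfl
  | succ m ih => rw [engel, engel, map_pcomm, ih]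

end Commutators

theorem sub_one_pow_prime_pow {R : Type*} [Ring R] {p : ℕ} (hp : p.Prime) (hR : (p : R) = 0)
    (a : R) (j : ℕ) : (a - 1) ^ p ^ j = a ^ p ^ j - 1 := by
  rcases subsingleton_or_nontrivial R with _ | _
  · exact Subsingleton.elim _ _
  have : CharP R p := (CharP.charP_iff_prime_eq_zero hp).2 hR
  have : ExpChar R p := ExpChar.prime hp
  simpa using sub_pow_expChar_pow_of_commute p j (Commute.one_right a)

section EngelFrobenius

open scoped IsMulCommutative

variable {G : Type*} [Group G] (M : Subgroup G) [M.Normal]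

/-- Conjugation `v ↦ y⁻¹ v y` on `M`, written additively so that
`[v, y] = (conjEnd M y - 1) v`. -/
def conjEnd (y : G) : AddMonoid.End (Additive M) :=
  MonoidHom.toAdditive (MulAut.conjNormal (H := M) y⁻¹).toMonoidHom

variable {M}

lemma coe_toMul_conjEnd_apply (y : G) (v : Additive M) :
    ((conjEnd M y v).toMul : G) = y⁻¹ * v.toMul * y := by
  change ((MulAut.conjNormal (H := M) y⁻¹ v.toMul : M) : G) = _
  rw [MulAut.conjNormal_apply, inv_inv]

lemma conjEnd_pow (y : G) (m : ℕ) : conjEnd M y ^ m = conjEnd M (y ^ m) := by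
  induction m with
  | zero => ext v; simp [coe_toMul_conjEnd_apply]
  | succ m ih =>
    ext v
    rw [pow_succ', AddMonoid.End.coe_mul, Function.comp_apply, ih, coe_toMul_conjEnd_apply,
      coe_toMul_conjEnd_apply, coe_toMul_conjEnd_apply, pow_succ]
    group

variable [IsMulCommutative M]

lemma coe_toMul_conjEnd_sub_one_apply (y : G) (v : Additive M) :
    (((conjEnd M y - 1) v).toMul : G) = pcomm (v.toMul : G) y := by
  change ((conjEnd M y v - v).toMul : G) = _
  rw [toMul_sub, div_eq_inv_mul, Subgroup.coe_mul, Subgroup.coe_inv, coe_toMul_conjEnd_apply,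
    pcomm]
  group

lemma coe_toMul_conjEnd_sub_one_pow_apply (y : G) (v : Additive M) (m : ℕ) :
    ((((conjEnd M y - 1) ^ m) v).toMul : G) = engel (v.toMul : G) y m := by
  induction m generalizing v with
  | zero => rfl
  | succ m ih => rw [pow_succ', AddMonoid.End.coe_mul, Function.comp_apply,
      coe_toMul_conjEnd_sub_one_apply, ih, engel]

theorem engel_prime_pow_eq_pcomm {p : ℕ} (hp : p.Prime) (hexp : ∀ a : M, a ^ p = 1) {x : G}
    (hx : x ∈ M) (y : G) (j : ℕ) : engel x y (p ^ j) = pcomm x (y ^ p ^ j) := by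
  have hchar : (p : AddMonoid.End (Additive M)) = 0 := by
    ext v
    rw [AddMonoid.End.natCast_apply, ← ofMul_toMul v, ← ofMul_pow, hexp]
    rfl
  have h := coe_toMul_conjEnd_sub_one_pow_apply y (Additive.ofMul ⟨x, hx⟩) (p ^ j)
  rwa [sub_one_pow_prime_pow hp hchar, conjEnd_pow, coe_toMul_conjEnd_sub_one_apply,
    eq_comm] at h

end EngelFrobenius

theorem engel_prime_pow_mem {G : Type*} [Group G] {p : ℕ} (hp : p.Prime) {K N : Subgroup G}
    [K.Normal] [N.Normal] (hcomm : ∀ a ∈ K, ∀ b ∈ K, pcomm a b ∈ N)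
    (hpow : ∀ a ∈ K, a ^ p ∈ N) {x y : G} (hx : x ∈ K) {j : ℕ} (hy : y ^ p ^ j ∈ K) :
    engel x y (p ^ j) ∈ N := by
  let π := QuotientGroup.mk' N
  let M := K.map π
  have : M.Normal := Subgroup.Normal.map inferInstance π (QuotientGroup.mk'_surjective N)
  have : IsMulCommutative M := by
    refine isMulCommutative_iff.2 ?_
    rintro ⟨_, a, ha, rfl⟩ ⟨_, b, hb, rfl⟩
    refine Subtype.ext (pcomm_eq_one_iff.1 ?_)
    rw [← map_pcomm]
    exact (QuotientGroup.eq_one_iff _).2 (hcomm a ha b hb)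
  have hexp : ∀ a : M, a ^ p = 1 := by
    rintro ⟨_, a, ha, rfl⟩
    refine Subtype.ext ?_
    rw [Subgroup.coe_pow, ← map_pow]
    exact (QuotientGroup.eq_one_iff _).2 (hpow a ha)
  rw [← QuotientGroup.eq_one_iff, ← QuotientGroup.mk'_apply, map_engel,
    engel_prime_pow_eq_pcomm hp hexp ⟨x, hx, rfl⟩, ← map_pow, ← map_pcomm]
  exact (QuotientGroup.eq_one_iff _).2 (hcomm x hx _ hy)

section Tree

/-- The identity, exhibiting `W A (n + 1)` as the semidirect product it is defined to be. -/
noncomputable def W.succEquiv (A : ℕ → Type) [∀ i, CommGroup (A i)] (n : ℕ) :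
    W A (n + 1) ≃* (A n → W A n) ⋊[wreathRφ (W A n) (A n)] A n :=
  MulEquiv.refl _

variable {A : ℕ → Type} [∀ i, CommGroup (A i)]

lemma St_zero (n : ℕ) : St A n 0 = ⊤ := by
  cases n <;> rfl

lemma mem_St_succ_succ {n k : ℕ} {x : W A (n + 1)} :
    x ∈ St A (n + 1) (k + 1) ↔
      (∀ v, (W.succEquiv A n x).left v ∈ St A n k) ∧ (W.succEquiv A n x).right = 1 := by
  constructor
  · rintro ⟨f, hf, rfl⟩
    exact ⟨fun v => hf v trivial, rfl⟩
  · rintro ⟨hleft, hright⟩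
    refine ⟨_, fun v _ => hleft v, ?_⟩
    exact SemidirectProduct.ext (N := A n → W A n) rfl hright.symm

instance St.normal (n k : ℕ) : (St A n k).Normal := by
  induction n generalizing k with
  | zero => exact Subgroup.normal_top
  | succ n ih =>
    cases k with
    | zero => rw [St_zero]; infer_instance
    | succ k =>
      refine ⟨fun x hx h => ?_⟩
      obtain ⟨hleft, hright⟩ := mem_St_succ_succ.1 hx
      refine mem_St_succ_succ.2 ⟨fun v => ?_, ?_⟩
      · simp only [map_mul, map_inv, SemidirectProduct.mul_left, SemidirectProduct.mul_right,
          hright, mul_one, SemidirectProduct.inv_left, MulAut.inv_apply,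
          MulEquiv.apply_symm_apply, Pi.mul_apply, Pi.inv_apply]
        exact (ih k).conj_mem _ (hleft _) _
      · simp only [map_mul, map_inv, SemidirectProduct.mul_right, hright, mul_one,
          SemidirectProduct.inv_right, mul_inv_cancel]

lemma pcomm_mem_St_succ {n k : ℕ} {g g' : W A n} (hg : g ∈ St A n k) (hg' : g' ∈ St A n k) :
    pcomm g g' ∈ St A n (k + 1) := by
  induction n generalizing k with
  | zero => trivial
  | succ n ih =>
    cases k with
    | zero =>
      refine mem_St_succ_succ.2 ⟨fun v => by rw [St_zero]; trivial, ?_⟩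
      change SemidirectProduct.rightHom (pcomm (W.succEquiv A n g) (W.succEquiv A n g')) = 1
      rw [map_pcomm, pcomm_eq_one_iff]
      exact mul_comm _ _
    | succ k =>
      obtain ⟨f, hf, rfl⟩ := hg
      obtain ⟨f', hf', rfl⟩ := hg'
      exact ⟨pcomm f f', fun v _ => ih (hf v trivial) (hf' v trivial), map_pcomm _ _ _⟩

lemma pow_mem_St_succ {p : ℕ} (hexp : ∀ (i : ℕ) (a : A i), a ^ p = 1) {n k : ℕ} {g : W A n}
    (hg : g ∈ St A n k) : g ^ p ∈ St A n (k + 1) := by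
  induction n generalizing k with
  | zero => trivial
  | succ n ih =>
    cases k with
    | zero =>
      refine mem_St_succ_succ.2 ⟨fun v => by rw [St_zero]; trivial, ?_⟩
      change SemidirectProduct.rightHom (W.succEquiv A n g ^ p) = 1
      rw [map_pow, hexp]
    | succ k =>
      obtain ⟨f, hf, rfl⟩ := hg
      exact ⟨f ^ p, fun v _ => ih (hf v trivial), map_pow _ _ _⟩

lemma pow_pow_mem_St {p : ℕ} (hexp : ∀ (i : ℕ) (a : A i), a ^ p = 1) (n k : ℕ)
    (h : W A n) : h ^ p ^ k ∈ St A n k := by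
  induction k with
  | zero => rw [St_zero]; trivial
  | succ k ih =>
    rw [pow_succ, pow_mul]
    exact pow_mem_St_succ hexp ih

end Tree

/-- If `g ∈ St(k)` and `h ∈ W_n` is arbitrary, then `[g,_{p^k} h] ∈ St(k+1)`. -/
theorem stmt11 (p : ℕ) (hp : p.Prime) (A : ℕ → Type) [∀ i, CommGroup (A i)]
    (hexp : ∀ (i : ℕ) (a : A i), a ^ p = 1) (n k : ℕ) (g : W A n)
    (hg : g ∈ St A n k) (h : W A n) :
    engel g h (p ^ k) ∈ St A n (k + 1) :=
  engel_prime_pow_mem hp (fun _ ha _ hb => pcomm_mem_St_succ ha hb)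
    (fun _ ha => pow_mem_St_succ hexp ha) hg (pow_pow_mem_St hexp n k h)
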